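/- Let B* = ∩_{i=1}^n B(v_i, ρ) be a nonempty intersection of closed balls of radius ρ > 0 in ℝ^d, and suppose B* contains at least two points. Then for every v ∈ ℝ^d there exist nonnegative μ_1,…,μ_n and a positive μ̄ with μ̄ + Σ_i μ_i = 1 such that proj_{B*}(v) = μ̄ v + Σ_i μ_i v_i. -/

import Mathlib

/-!
The midpoint of two distinct points of `B*` lies in every open ball (strict convexity), so `B*`
satisfies Slater's condition. Consequently the cone generated by the outward normals `z - vᵢ` of
the constraints active at `z = proj_{B*} v` is closed, and Farkas' lemma gives the KKT condition
`v - z = ∑ λᵢ (z - vᵢ)` with `λᵢ ≥ 0`: otherwise a separating vector, tilted towards the Slater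
point, is a feasible direction at `z` along which the distance to `v` decreases. Solving for `z`
gives `z = (v + ∑ λᵢ vᵢ) / (1 + ∑ λᵢ)`.
-/

open Finset Filter Topology Metric
open scoped RealInnerProductSpace

namespace PointedCone

variable {E ι : Type*} [AddCommGroup E] [Module ℝ E] [Fintype ι]

theorem mem_hull_range_iff {g : ι → E} {x : E} :
    x ∈ hull ℝ (Set.range g) ↔ ∃ c : ι → ℝ, (∀ i, 0 ≤ c i) ∧ ∑ i, c i • g i = x := by
  rw [Submodule.mem_span_range_iff_exists_fun]
  constructor
  · rintro ⟨c, rfl⟩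
    exact ⟨fun i => c i, fun i => (c i).2, rfl⟩
  · rintro ⟨c, hc, rfl⟩
    exact ⟨fun i => ⟨c i, hc i⟩, rfl⟩

theorem isClosed_hull_range_of_forall_lt_zero [TopologicalSpace E] [IsTopologicalAddGroup E]
    [ContinuousSMul ℝ E] [T2Space E] {g : ι → E} (φ : E →L[ℝ] ℝ) (hφ : ∀ i, φ (g i) < 0) :
    IsClosed (hull ℝ (Set.range g) : Set E) := by
  -- `φ` bounds the coefficients near any point, so there the cone is the image of a compact box.
  set L : (ι → ℝ) → E := fun c => ∑ i, c i • g i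
  have hL : Continuous L := by fun_prop
  refine isClosed_of_closure_subset fun x hx => ?_
  set R := -φ x + 1
  have hxU : x ∈ φ ⁻¹' Set.Ioi (-R) := by simp [R]
  have hUK : φ ⁻¹' Set.Ioi (-R) ∩ hull ℝ (Set.range g) ⊆
      L '' Set.univ.pi fun j => Set.Icc 0 (R / -φ (g j)) := by
    rintro y ⟨hyR, hy⟩
    obtain ⟨c, hc, rfl⟩ := mem_hull_range_iff.1 hy
    refine ⟨c, fun j _ => ⟨hc j, ?_⟩, rfl⟩
    rw [le_div_iff₀ (neg_pos.2 (hφ j))]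
    have hφy : φ (L c) = ∑ i, c i * φ (g i) := by simp [L]
    have : c j * -φ (g j) ≤ ∑ i, c i * -φ (g i) :=
      single_le_sum (fun i _ => mul_nonneg (hc i) (neg_pos.2 (hφ i)).le) (mem_univ j)
    rw [Set.mem_preimage, Set.mem_Ioi, hφy] at hyR
    simp only [mul_neg, sum_neg_distrib] at this
    linarith
  have hcpt : IsCompact (L '' Set.univ.pi fun j => Set.Icc 0 (R / -φ (g j))) :=
    (isCompact_univ_pi fun _ => isCompact_Icc).image hL
  obtain ⟨c, hc, rfl⟩ := hcpt.isClosed.closure_subset_iff.2 hUK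
    ((φ.continuous.isOpen_preimage _ isOpen_Ioi).inter_closure ⟨hxU, hx⟩)
  exact mem_hull_range_iff.2 ⟨c, fun i => (hc i (Set.mem_univ i)).1, rfl⟩

end PointedCone

section InnerProductSpace

variable {E : Type*} [NormedAddCommGroup E] [InnerProductSpace ℝ E]

theorem real_inner_sub_self_neg_of_norm_lt {a b : E} (h : ‖b‖ < ‖a‖) : ⟪a, b - a⟫ < 0 := by
  rw [inner_sub_right, real_inner_self_eq_norm_sq]
  nlinarith [real_inner_le_norm a b, norm_nonneg b]

theorem eventually_norm_add_smul_lt {x u : E} (h : ⟪x, u⟫ < 0) :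
    ∀ᶠ t in 𝓝[>] (0 : ℝ), ‖x + t • u‖ < ‖x‖ := by
  have hδ : 0 < -2 * ⟪x, u⟫ / (‖u‖ ^ 2 + 1) := by apply div_pos <;> nlinarith [sq_nonneg ‖u‖]
  filter_upwards [Ioo_mem_nhdsGT hδ] with t ⟨ht0, htδ⟩
  rw [lt_div_iff₀ (by positivity)] at htδ
  have hsq : ‖x + t • u‖ ^ 2 < ‖x‖ ^ 2 := by
    rw [norm_add_sq_real, real_inner_smul_right, norm_smul, Real.norm_of_nonneg ht0.le]
    nlinarith [sq_nonneg ‖u‖]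
  exact lt_of_pow_lt_pow_left₀ 2 (norm_nonneg x) hsq

theorem eventually_add_smul_mem_closedBall {c z u : E} {r : ℝ} (hz : z ∈ closedBall c r)
    (hu : dist z c = r → ⟪z - c, u⟫ < 0) :
    ∀ᶠ t in 𝓝[>] (0 : ℝ), z + t • u ∈ closedBall c r := by
  rcases (mem_closedBall.1 hz).lt_or_eq with hlt | heq
  · have hlim : Tendsto (fun t : ℝ => z + t • u) (𝓝[>] 0) (𝓝 z) :=
      ((continuous_const.add (continuous_id.smul continuous_const)).tendsto' 0 z
        (by simp)).mono_left nhdsWithin_le_nhds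
    exact (hlim.eventually (isOpen_ball.mem_nhds hlt)).mono fun _ ht => ball_subset_closedBall ht
  · filter_upwards [eventually_norm_add_smul_lt (hu heq)] with t ht
    rw [mem_closedBall, dist_eq_norm, add_sub_right_comm, ← heq, dist_eq_norm]
    exact ht.le

variable [CompleteSpace E] {ι : Type*} [Fintype ι]

theorem sub_mem_hull_of_forall_norm_sub_le {c : ι → E} {r : ι → ℝ} {m v z : E}
    (hm : ∀ i, m ∈ ball (c i) (r i)) (hz : z ∈ ⋂ i, closedBall (c i) (r i))
    (hmin : ∀ y ∈ ⋂ i, closedBall (c i) (r i), ‖v - z‖ ≤ ‖v - y‖) :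
    v - z ∈ PointedCone.hull ℝ (Set.range fun i => z - c i) := by
  rw [Set.mem_iInter] at hz
  set g : {i // dist z (c i) = r i} → E := fun i => z - c i
  have hg : ∀ i, ⟪g i, m - z⟫ < 0 := fun i => by
    have h := real_inner_sub_self_neg_of_norm_lt (a := z - c i) (b := m - c i)
    rw [sub_sub_sub_cancel_right] at h
    exact h (by rw [← dist_eq_norm, ← dist_eq_norm, i.2]; exact hm i)
  have hK : IsClosed (PointedCone.hull ℝ (Set.range g) : Set E) :=
    PointedCone.isClosed_hull_range_of_forall_lt_zero (innerSL ℝ (m - z))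
      fun i => by rw [innerSL_apply_apply, real_inner_comm]; exact hg i
  refine Submodule.span_mono (s := Set.range g)
    (Set.range_subset_iff.2 fun i => Set.mem_range_self i.1) ?_
  by_contra hvz
  obtain ⟨w, hw, hvzw⟩ := ProperCone.hyperplane_separation' ⟨_, hK⟩ hvz
  obtain ⟨ε, hε, hεvz⟩ := exists_pos_mul_lt (neg_pos.2 hvzw) (-⟪v - z, m - z⟫)
  set u := ε • (m - z) - w
  have hact : ∀ i, dist z (c i) = r i → ⟪z - c i, u⟫ < 0 := by
    intro i hi
    have := hw (g ⟨i, hi⟩) (PointedCone.subset_hull (Set.mem_range_self _))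
    rw [inner_sub_right, real_inner_smul_right]
    linarith [mul_neg_of_pos_of_neg hε (hg ⟨i, hi⟩)]
  have hdesc : ⟪z - v, u⟫ < 0 := by
    rw [← neg_sub, inner_neg_left, inner_sub_right, real_inner_smul_right]
    linarith [mul_comm ε ⟪v - z, m - z⟫]
  obtain ⟨t, hfeas, hlt⟩ := ((eventually_all.2 fun i =>
    eventually_add_smul_mem_closedBall (hz i) (hact i)).and
      (eventually_norm_add_smul_lt hdesc)).exists
  have := hmin _ (Set.mem_iInter.2 hfeas)
  rw [norm_sub_rev v, norm_sub_rev v, add_sub_right_comm] at this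
  linarith

end InnerProductSpace

theorem exists_convex_combination_of_sum_smul_sub_eq {E ι : Type*} [AddCommGroup E] [Module ℝ E]
    [Fintype ι] {v z : E} {c : ι → E} {l : ι → ℝ} (hl : ∀ i, 0 ≤ l i)
    (h : ∑ i, l i • (z - c i) = v - z) :
    ∃ μbar : ℝ, ∃ μ : ι → ℝ, 0 < μbar ∧ (∀ i, 0 ≤ μ i) ∧ μbar + ∑ i, μ i = 1 ∧
      z = μbar • v + ∑ i, μ i • c i := by
  set s := ∑ i, l i
  have hs : 0 < 1 + s := by linarith [sum_nonneg fun i (_ : i ∈ univ) => hl i]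
  have hz : (1 + s) • z = v + ∑ i, l i • c i := by
    rw [sum_congr rfl fun i _ => smul_sub (l i) z (c i), sum_sub_distrib,
      ← sum_smul] at h
    rw [add_smul, one_smul, sub_eq_iff_eq_add.1 h]
    abel
  refine ⟨(1 + s)⁻¹, fun i => (1 + s)⁻¹ * l i, inv_pos.2 hs,
    fun i => mul_nonneg (inv_pos.2 hs).le (hl i), ?_, ?_⟩
  · rw [← mul_sum, ← mul_one_add, inv_mul_cancel₀ hs.ne']
  · calc z = (1 + s)⁻¹ • ((1 + s) • z) := by rw [smul_smul, inv_mul_cancel₀ hs.ne', one_smul]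
      _ = _ := by simp only [hz, smul_add, smul_sum, smul_smul]

theorem projection_onto_ball_intersection_convex_combination_general
    {d n : ℕ} (v' : Fin n → EuclideanSpace ℝ (Fin d)) (ρ : ℝ)
    (Bstar : Set (EuclideanSpace ℝ (Fin d)))
    (hB : Bstar = ⋂ i, Metric.closedBall (v' i) ρ)
    (hnonsingleton : ∃ a ∈ Bstar, ∃ b ∈ Bstar, a ≠ b)
    (v z : EuclideanSpace ℝ (Fin d))
    (hz : z ∈ Bstar) (hproj : ∀ y ∈ Bstar, ‖v - z‖ ≤ ‖v - y‖) :
    ∃ μbar : ℝ, ∃ μ : Fin n → ℝ,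
      0 < μbar ∧ (∀ i, 0 ≤ μ i) ∧ μbar + ∑ i, μ i = 1 ∧
      z = μbar • v + ∑ i, μ i • v' i := by
  subst hB
  obtain ⟨a, ha, b, hb, hab⟩ := hnonsingleton
  rw [Set.mem_iInter] at ha hb
  have hslater : ∀ i, (1 / 2 : ℝ) • a + (1 / 2 : ℝ) • b ∈ ball (v' i) ρ := fun i =>
    combo_mem_ball_of_ne (ha i) (hb i) hab (by norm_num) (by norm_num) (by norm_num)
  obtain ⟨l, hl, hsum⟩ := PointedCone.mem_hull_range_iff.1
    (sub_mem_hull_of_forall_norm_sub_le (r := fun _ => ρ) hslater hz hproj)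
  exact exists_convex_combination_of_sum_smul_sub_eq hl hsum

/-- The projection onto a nonempty, non-singleton intersection of equal-radius
closed balls is a convex combination of the projected point and the centers,
with strictly positive weight on the projected point. -/
theorem projection_onto_ball_intersection_convex_combination
    {d n : ℕ} (v' : Fin n → EuclideanSpace ℝ (Fin d)) (ρ : ℝ) (hρ : 0 < ρ)
    (Bstar : Set (EuclideanSpace ℝ (Fin d)))
    (hB : Bstar = ⋂ i, Metric.closedBall (v' i) ρ)
    (hne : Bstar.Nonempty)
    (hnonsingleton : ∃ a ∈ Bstar, ∃ b ∈ Bstar, a ≠ b)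
    (v z : EuclideanSpace ℝ (Fin d))
    (hz : z ∈ Bstar) (hproj : ∀ y ∈ Bstar, ‖v - z‖ ≤ ‖v - y‖) :
    ∃ μbar : ℝ, ∃ μ : Fin n → ℝ,
      0 < μbar ∧ (∀ i, 0 ≤ μ i) ∧ μbar + ∑ i, μ i = 1 ∧
      z = μbar • v + ∑ i, μ i • v' i :=
  projection_onto_ball_intersection_convex_combination_general v' ρ Bstar hB hnonsingleton v z hz
    hproj
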